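/- arXiv:2210.00575 — 3 statements merged into one kernel-verified Lean document; each statement's English description precedes it below -/
import Mathlib

section
/- Let u^1, ..., u^{n+1} be unit vectors in R^n with ⟨u^j,u^k⟩ = -1/n + ((n+1)/n)δ_{jk}, and let Q be the 3-tensor Q_{ijk} = Σ_ℓ u^ℓ_i u^ℓ_j u^ℓ_k, viewed as an n×n² matrix. Then Q Q^T = ((n+1)(n²−1)/n³) I(n). -/
open Finset

private lemma swap3 {α β : Type*} [Fintype α] [Fintype β] (f g : α → β → ℝ) :
    ∑ a : β, (∑ ℓ : α, f ℓ a) * (∑ m : α, g m a) = ∑ ℓ : α, ∑ m : α, ∑ a : β, f ℓ a * g m a := by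
  simp_rw [Finset.sum_mul_sum]
  rw [Finset.sum_comm]
  refine Finset.sum_congr rfl fun ℓ _ => ?_
  exact Finset.sum_comm

private lemma gram_lemma (n : ℕ) (hn : 2 ≤ n) (u : Fin (n + 1) → Fin n → ℝ)
    (h : ∀ j k, ∑ i, u j i * u k i
      = -1 / (n : ℝ) + ((n : ℝ) + 1) / (n : ℝ) * (if j = k then 1 else 0)) :
    ∀ a b, ∑ ℓ, u ℓ a * u ℓ b = ((n : ℝ) + 1) / (n : ℝ) * (if a = b then 1 else 0) := by
  have hn0 : (n : ℝ) ≠ 0 := Nat.cast_ne_zero.mpr (by omega)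
  set c : ℝ := ((n : ℝ) + 1) / (n : ℝ) with hc
  -- A : sum of squares of Gram entries
  have hA : ∑ a : Fin n, ∑ b : Fin n, (∑ ℓ, u ℓ a * u ℓ b) * (∑ m, u m a * u m b)
      = ((n:ℝ)+1)^2 / n := by
    have step1 : ∀ a : Fin n, ∑ b : Fin n, (∑ ℓ, u ℓ a * u ℓ b) * (∑ m, u m a * u m b)
        = ∑ ℓ, ∑ m, (u ℓ a * u m a) * (-1 / (n : ℝ) + c * (if ℓ = m then 1 else 0)) := by
      intro a
      rw [swap3 (fun ℓ b => u ℓ a * u ℓ b) (fun m b => u m a * u m b)]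
      refine sum_congr rfl fun ℓ _ => sum_congr rfl fun m _ => ?_
      rw [← h ℓ m, Finset.mul_sum]
      refine sum_congr rfl fun b _ => by ring
    simp_rw [step1]
    rw [Finset.sum_comm]
    have step2 : ∀ ℓ, ∑ a : Fin n, ∑ m : Fin (n+1),
        (u ℓ a * u m a) * (-1 / (n : ℝ) + c * (if ℓ = m then 1 else 0))
        = ∑ m : Fin (n+1), (-1 / (n : ℝ) + c * (if ℓ = m then 1 else 0))^2 := by
      intro ℓ
      refine Finset.sum_comm.trans ?_
      refine sum_congr rfl fun m _ => ?_
      rw [← Finset.sum_mul, h ℓ m, sq]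
    simp_rw [step2]
    have step3 : ∀ ℓ m : Fin (n+1), (-1 / (n : ℝ) + c * (if ℓ = m then 1 else 0))^2
        = 1/(n:ℝ)^2 + (c^2 - 2*c/n) * (if ℓ = m then 1 else 0) := by
      intro ℓ m; split_ifs <;> ring
    simp_rw [step3]
    simp [Finset.sum_add_distrib, ← Finset.mul_sum, Finset.sum_ite_eq, Finset.card_univ, hc]
    field_simp
    ring
  -- trace
  have hTr : ∑ a : Fin n, (∑ ℓ, u ℓ a * u ℓ a) = (n:ℝ) + 1 := by
    rw [Finset.sum_comm]
    simp_rw [h]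
    simp [Finset.sum_add_distrib, hc]
    field_simp
    ring
  -- mixed term
  have hM : ∑ a : Fin n, ∑ b : Fin n, (if a = b then (1:ℝ) else 0) * (∑ ℓ, u ℓ a * u ℓ b)
      = (n:ℝ) + 1 := by
    simp_rw [ite_mul, one_mul, zero_mul]
    rw [← hTr]
    refine sum_congr rfl fun a _ => ?_
    simp [Finset.sum_ite_eq]
  -- sum of squares of deviation is zero
  have hT : ∑ a : Fin n, ∑ b : Fin n,
      ((∑ ℓ, u ℓ a * u ℓ b) - c * (if a = b then 1 else 0))^2 = 0 := by
    have expand : ∀ a b : Fin n,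
        ((∑ ℓ, u ℓ a * u ℓ b) - c * (if a = b then 1 else 0))^2
        = (∑ ℓ, u ℓ a * u ℓ b) * (∑ m, u m a * u m b)
          - 2*c * ((if a = b then (1:ℝ) else 0) * (∑ ℓ, u ℓ a * u ℓ b))
          + c^2 * (if a = b then 1 else 0) := by
      intro a b; split_ifs <;> ring
    simp_rw [expand, Finset.sum_add_distrib, Finset.sum_sub_distrib, ← Finset.mul_sum]
    rw [hA, hM]
    simp [Finset.sum_ite_eq, Finset.card_univ, hc]
    field_simp
    ring
  intro a b
  have := (Finset.sum_eq_zero_iff_of_nonneg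
      (fun i _ => Finset.sum_nonneg fun j _ => sq_nonneg _)).mp hT a (mem_univ a)
  have h2 := (Finset.sum_eq_zero_iff_of_nonneg (fun j _ => sq_nonneg _)).mp this b (mem_univ b)
  have h3 := pow_eq_zero_iff (two_ne_zero) |>.mp h2
  linarith [h3]


private lemma colsum_lemma (n : ℕ) (hn : 2 ≤ n) (u : Fin (n + 1) → Fin n → ℝ)
    (h : ∀ j k, ∑ i, u j i * u k i
      = -1 / (n : ℝ) + ((n : ℝ) + 1) / (n : ℝ) * (if j = k then 1 else 0)) :
    ∀ a, ∑ ℓ, u ℓ a = 0 := by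
  have hn0 : (n : ℝ) ≠ 0 := Nat.cast_ne_zero.mpr (by omega)
  have hSsq : ∑ a, (∑ ℓ, u ℓ a) * (∑ m, u m a) = 0 := by
    rw [swap3]
    simp_rw [h]
    simp [Finset.sum_add_distrib, Finset.mul_sum, Finset.sum_ite_eq, Finset.card_univ]
    ring
  have h2 : ∑ a, (∑ ℓ, u ℓ a) ^ 2 = 0 := by simpa [sq] using hSsq
  intro a
  have := (Finset.sum_eq_zero_iff_of_nonneg (fun i _ => sq_nonneg _)).mp h2 a (mem_univ a)
  exact pow_eq_zero_iff (two_ne_zero) |>.mp this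

theorem stmt_4 (n : ℕ) (hn : 2 ≤ n) (u : Fin (n + 1) → Fin n → ℝ)
    (h : ∀ j k, ∑ i, u j i * u k i
      = -1 / (n : ℝ) + ((n : ℝ) + 1) / (n : ℝ) * (if j = k then 1 else 0))
    (Q : Fin n → Fin n → Fin n → ℝ)
    (hQ : ∀ i j k, Q i j k = ∑ ℓ, u ℓ i * u ℓ j * u ℓ k) :
    ∀ a b, ∑ j, ∑ k, Q a j k * Q b j k
      = ((n : ℝ) + 1) * ((n : ℝ) ^ 2 - 1) / (n : ℝ) ^ 3 * (if a = b then 1 else 0) := by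
  have hn0 : (n : ℝ) ≠ 0 := Nat.cast_ne_zero.mpr (by omega)
  have hS := colsum_lemma n hn u h
  have hG := gram_lemma n hn u h
  set c : ℝ := ((n : ℝ) + 1) / (n : ℝ) with hc
  intro a b
  have step1 : ∀ j, ∑ k, Q a j k * Q b j k
      = ∑ ℓ, ∑ m, (u ℓ a * u ℓ j) * (u m b * u m j) * (∑ k, u ℓ k * u m k) := by
    intro j
    simp_rw [hQ]
    rw [swap3 (fun ℓ k => u ℓ a * u ℓ j * u ℓ k) (fun m k => u m b * u m j * u m k)]
    refine sum_congr rfl fun ℓ _ => sum_congr rfl fun m _ => ?_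
    rw [Finset.mul_sum]
    exact sum_congr rfl fun k _ => by ring
  simp_rw [step1]
  rw [Finset.sum_comm]
  have step2 : ∀ ℓ, ∑ j : Fin n, ∑ m : Fin (n+1),
      (u ℓ a * u ℓ j) * (u m b * u m j) * (∑ k, u ℓ k * u m k)
      = ∑ m : Fin (n+1), (u ℓ a * u m b) * (∑ j, u ℓ j * u m j) * (∑ k, u ℓ k * u m k) := by
    intro ℓ
    refine Finset.sum_comm.trans ?_
    refine sum_congr rfl fun m _ => ?_
    rw [← Finset.sum_mul]
    congr 1
    rw [mul_comm (u ℓ a * u m b), Finset.sum_mul]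
    exact sum_congr rfl fun j _ => by ring
  simp_rw [step2, h]
  have step3 : ∀ ℓ m : Fin (n+1),
      (u ℓ a * u m b) * (-1 / (n : ℝ) + c * (if ℓ = m then 1 else 0))
        * (-1 / (n : ℝ) + c * (if ℓ = m then 1 else 0))
      = (u ℓ a * (1/(n:ℝ)^2)) * u m b
        + (u ℓ a * u m b * (c^2 - 2*c/n)) * (if ℓ = m then 1 else 0) := by
    intro ℓ m; split_ifs <;> ring
  simp_rw [step3, Finset.sum_add_distrib]
  have part1 : ∑ ℓ : Fin (n+1), ∑ m : Fin (n+1), (u ℓ a * (1/(n:ℝ)^2)) * u m b = 0 := by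
    refine Finset.sum_eq_zero fun ℓ _ => ?_
    rw [← Finset.mul_sum, hS b, mul_zero]
  have part2 : ∑ ℓ : Fin (n+1), ∑ m : Fin (n+1),
      (u ℓ a * u m b * (c^2 - 2*c/n)) * (if ℓ = m then 1 else 0)
      = (c^2 - 2*c/n) * (c * (if a = b then 1 else 0)) := by
    have inner : ∀ ℓ : Fin (n+1), ∑ m : Fin (n+1),
        (u ℓ a * u m b * (c^2 - 2*c/n)) * (if ℓ = m then 1 else 0)
        = (u ℓ a * u ℓ b) * (c^2 - 2*c/n) := by
      intro ℓ
      simp [mul_ite, Finset.sum_ite_eq]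
    simp_rw [inner]
    rw [← Finset.sum_mul, hG a b, hc]
    ring
  rw [part1, part2, zero_add, hc]
  field_simp
  ring
end

section
/- Let u^1, ..., u^{n+1} be unit vectors in R^n with ⟨u^j,u^k⟩ = -1/n + ((n+1)/n)δ_{jk}, and define Q_{ijk} = Σ_ℓ u^ℓ_i u^ℓ_j u^ℓ_k. Then for each k, contracting Q against u^k in one index yields Q u^k = ((n+1)/n)(P^k − (1/n) I(n)), i.e., Σ_m Q_{ijm} u^k_m = ((n+1)/n)(u^k_i u^k_j − δ_{ij}/n). -/
/-!
With `U` the matrix whose rows are the `u^ℓ`, the Gram relation turns the contraction into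
`-(1/n) (UᵀU)_{ij} + c u^k_i u^k_j` with `c = (n+1)/n`, so everything rests on the frame being
tight, `UᵀU = c I`. The all-ones vector lies in the kernel of `UUᵀ = c I - J/n` (`J` all ones), hence of
`Uᵀ`; so `J U = 0`, `UUᵀU = cU`, and `A = UᵀU` satisfies `A² = cA` with `tr A = tr UUᵀ = c n`.
Then `tr ((A - cI)ᵀ(A - cI)) = 0`, which forces `A = cI`.
-/

open Finset Matrix

namespace Matrix

variable {m n : Type*} [Fintype m] [Fintype n]

theorem transpose_mul_self_eq_smul_one [DecidableEq n] {U : Matrix m n ℝ} {c : ℝ}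
    (hU : U * Uᵀ * U = c • U) (htr : (U * Uᵀ).trace = c * Fintype.card n) :
    Uᵀ * U = c • 1 := by
  set A := Uᵀ * U
  have hA_sq : A * A = c • A := by
    rw [show A * A = Uᵀ * (U * Uᵀ * U) by simp only [A, Matrix.mul_assoc], hU, Matrix.mul_smul]
  have hA_tr : A.trace = c * Fintype.card n := by rw [trace_mul_comm, htr]
  have hB : (A - c • 1)ᴴ = A - c • 1 := by
    simp [conjTranspose_eq_transpose_of_trivial, A, transpose_sub, transpose_smul]
  -- `(A - c)² = c • (c - A)` since `A² = c A`, and the trace of the right side vanishes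
  have hB_tr : ((A - c • 1)ᴴ * (A - c • 1)).trace = 0 := by
    rw [hB, sub_mul, mul_sub, mul_sub, hA_sq]
    simp [trace_sub, trace_smul, hA_tr]
  exact sub_eq_zero.mp (trace_conjTranspose_mul_self_eq_zero_iff.mp hB_tr)

theorem transpose_mul_self_eq_smul_one_of_mul_transpose_eq [DecidableEq m] [DecidableEq n]
    {U : Matrix m n ℝ} {c d : ℝ} (hG : U * Uᵀ = c • 1 - d • vecMulVec 1 1)
    (hcd : c = d * Fintype.card m) (hmn : Fintype.card m = Fintype.card n + 1) :
    Uᵀ * U = c • 1 := by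
  have hcol : Uᵀ *ᵥ 1 = 0 := by
    rw [← conjTranspose_eq_transpose_of_trivial, ← self_mul_conjTranspose_mulVec_eq_zero,
      conjTranspose_eq_transpose_of_trivial, hG, sub_mulVec, smul_mulVec, smul_mulVec,
      one_mulVec, vecMulVec_mulVec, dotProduct_one]
    ext
    simp [hcd]
  have hU : U * Uᵀ * U = c • U := by
    rw [hG, Matrix.sub_mul, smul_mul, smul_mul, vecMulVec_mul, ← mulVec_transpose, hcol,
      Matrix.one_mul]
    simp
  refine transpose_mul_self_eq_smul_one hU ?_
  rw [hG, trace_sub, trace_smul, trace_smul, trace_one, trace_vecMulVec, dotProduct_one]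
  simp [hmn, hcd]
  ring

end Matrix

theorem stmt_5_general (n : ℕ) (u : Fin (n + 1) → Fin n → ℝ)
    (h : ∀ j k, ∑ i, u j i * u k i
      = -1 / (n : ℝ) + ((n : ℝ) + 1) / (n : ℝ) * (if j = k then 1 else 0))
    (Q : Fin n → Fin n → Fin n → ℝ)
    (hQ : ∀ i j k, Q i j k = ∑ ℓ, u ℓ i * u ℓ j * u ℓ k) :
    ∀ (k : Fin (n + 1)) (i j : Fin n),
      ∑ m, Q i j m * u k m
        = ((n : ℝ) + 1) / (n : ℝ) * (u k i * u k j - (if i = j then 1 else 0) / (n : ℝ)) := by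
  set c : ℝ := ((n : ℝ) + 1) / n
  have hG : of u * (of u)ᵀ = c • 1 - (1 / n : ℝ) • vecMulVec 1 1 := by
    ext j k
    simp only [mul_apply, of_apply, transpose_apply, h, Matrix.sub_apply, Matrix.smul_apply,
      one_apply, vecMulVec_apply, Pi.one_apply, smul_eq_mul]
    ring
  have hframe : (of u)ᵀ * of u = c • 1 :=
    transpose_mul_self_eq_smul_one_of_mul_transpose_eq hG (by simp [c]; ring) (by simp)
  intro k i j
  calc ∑ m, Q i j m * u k m
      = ∑ ℓ, u ℓ i * u ℓ j * ∑ m, u ℓ m * u k m := by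
        simp only [hQ, sum_mul, mul_sum]
        rw [sum_comm]
        simp only [mul_assoc]
    _ = -1 / n * ((of u)ᵀ * of u) i j + c * (u k i * u k j) := by
        simp only [h, mul_add, mul_ite, mul_one, mul_zero, sum_add_distrib, sum_ite_eq',
          mem_univ, if_true, ← sum_mul, mul_apply, transpose_apply, of_apply]
        ring
    _ = c * (u k i * u k j - (if i = j then 1 else 0) / n) := by
        rw [hframe, Matrix.smul_apply, one_apply, smul_eq_mul]
        ring

theorem stmt_5 (n : ℕ) (hn : 2 ≤ n) (u : Fin (n + 1) → Fin n → ℝ)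
    (h : ∀ j k, ∑ i, u j i * u k i
      = -1 / (n : ℝ) + ((n : ℝ) + 1) / (n : ℝ) * (if j = k then 1 else 0))
    (Q : Fin n → Fin n → Fin n → ℝ)
    (hQ : ∀ i j k, Q i j k = ∑ ℓ, u ℓ i * u ℓ j * u ℓ k) :
    ∀ (k : Fin (n + 1)) (i j : Fin n),
      ∑ m, Q i j m * u k m
        = ((n : ℝ) + 1) / (n : ℝ) * (u k i * u k j - (if i = j then 1 else 0) / (n : ℝ)) :=
  stmt_5_general n u h Q hQ
end

section
/- Let b^1, b^2, b^3, b^4 be unit vectors in R³ with ⟨b^i, b^j⟩ = (4δ_{ij} − 1)/3, and Q_{ijk} = Σ_ℓ b^ℓ_i b^ℓ_j b^ℓ_k. For a ∈ S², define μ_Q(a) = det(Σ_{j=1}^3 a_j Q_j), where Q_j is the j-th slice of Q. Then each b^ℓ satisfies Σ_m Q_{ijm} b^ℓ_j b^ℓ_m = (8/9) b^ℓ_i (i.e., b^ℓ is an 'eigentensor direction': Q(b^ℓ ⊗ b^ℓ) = (8/9) b^ℓ). -/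
open Finset

theorem stmt_14 (b : Fin 4 → Fin 3 → ℝ)
    (hb : ∀ i j, ∑ m, b i m * b j m = (4 * (if i = j then 1 else 0) - 1) / 3)
    (Q : Fin 3 → Fin 3 → Fin 3 → ℝ)
    (hQ : ∀ i j k, Q i j k = ∑ ℓ, b ℓ i * b ℓ j * b ℓ k) :
    ∀ (ℓ : Fin 4) (i : Fin 3),
      ∑ j, ∑ m, Q i j m * b ℓ j * b ℓ m = 8 / 9 * b ℓ i := by
  -- The four vectors sum to zero, componentwise.
  have hsq : ∑ i, (∑ ℓ, b ℓ i) ^ 2 = 0 := by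
    have h1 : ∑ i : Fin 3, (∑ ℓ, b ℓ i) ^ 2
        = ∑ ℓ₁ : Fin 4, ∑ ℓ₂ : Fin 4, ∑ i : Fin 3, b ℓ₁ i * b ℓ₂ i := by
      simp only [sq, Finset.sum_mul_sum]
      rw [Finset.sum_comm]
      refine Finset.sum_congr rfl fun ℓ₁ _ => ?_
      rw [Finset.sum_comm]
    rw [h1]
    simp only [hb]
    simp [Fin.sum_univ_four]
    norm_num
  have hzero : ∀ i, ∑ ℓ, b ℓ i = 0 := by
    intro i
    have h := (Finset.sum_eq_zero_iff_of_nonneg (fun i _ => sq_nonneg (∑ ℓ, b ℓ i))).mp hsq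
    exact pow_eq_zero_iff two_ne_zero |>.mp (h i (Finset.mem_univ i))
  intro ℓ i
  have key : ∑ j, ∑ m, Q i j m * b ℓ j * b ℓ m
      = ∑ ℓ' : Fin 4, b ℓ' i * (∑ j, b ℓ' j * b ℓ j) * (∑ m, b ℓ' m * b ℓ m) := by
    have hfac : ∀ ℓ' : Fin 4, b ℓ' i * (∑ j, b ℓ' j * b ℓ j) * (∑ m, b ℓ' m * b ℓ m)
        = ∑ j, ∑ m, b ℓ' i * b ℓ' j * b ℓ' m * b ℓ j * b ℓ m := by
      intro ℓ'
      simp only [Finset.mul_sum, Finset.sum_mul]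
      rw [Finset.sum_comm]
      exact Finset.sum_congr rfl fun j _ => Finset.sum_congr rfl fun m _ => by ring
    have swap : ∀ (g : Fin 4 → Fin 3 → Fin 3 → ℝ),
        ∑ j : Fin 3, ∑ m : Fin 3, ∑ ℓ'' : Fin 4, g ℓ'' j m
          = ∑ ℓ'' : Fin 4, ∑ j : Fin 3, ∑ m : Fin 3, g ℓ'' j m := by
      intro g
      rw [show (∑ j : Fin 3, ∑ m : Fin 3, ∑ ℓ'' : Fin 4, g ℓ'' j m)
            = ∑ j : Fin 3, ∑ ℓ'' : Fin 4, ∑ m : Fin 3, g ℓ'' j m from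
          Finset.sum_congr rfl fun j _ => Finset.sum_comm, Finset.sum_comm]
    simp only [hfac, hQ, Finset.sum_mul]
    exact swap fun ℓ'' j m => b ℓ'' i * b ℓ'' j * b ℓ'' m * b ℓ j * b ℓ m
  rw [key]
  simp only [hb]
  have hexp : ∀ ℓ' : Fin 4,
      b ℓ' i * ((4 * (if ℓ' = ℓ then (1:ℝ) else 0) - 1) / 3) *
        ((4 * (if ℓ' = ℓ then (1:ℝ) else 0) - 1) / 3)
      = (1/9) * b ℓ' i + (if ℓ' = ℓ then (8/9) * b ℓ' i else 0) := by
    intro ℓ'; by_cases h : ℓ' = ℓ <;> simp [h] <;> ring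
  rw [Finset.sum_congr rfl fun ℓ' _ => hexp ℓ']
  rw [Finset.sum_add_distrib, Finset.sum_ite_eq' Finset.univ ℓ (fun ℓ' => (8/9) * b ℓ' i)]
  rw [← Finset.mul_sum, hzero i]
  simp
end
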